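/- Let G be a graph and T a tree, both on n vertices. If 3·Δ(G) + ℓ(T) - 2 < n, then G and T pack. -/

import Mathlib

open SimpleGraph
open scoped Classical

/-- Degree of a vertex. -/
noncomputable def deg {V : Type} (G : SimpleGraph V) (v : V) : ℕ := Nat.card (G.neighborSet v)

/-- Number of vertices of degree exactly 1 (leaves for trees/forests). -/
noncomputable def numLeaves {V : Type} (G : SimpleGraph V) : ℕ := Nat.card {v : V // deg G v = 1}

/-- Number of connected components containing at least one edge. -/
noncomputable def numEdgeComps {V : Type} (G : SimpleGraph V) : ℕ :=
  Nat.card {c : G.ConnectedComponent // ∃ v w : V, G.Adj v w ∧ G.connectedComponentMk v = c}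

/-- Maximum degree. -/
noncomputable def maxDeg {V : Type} (G : SimpleGraph V) : ℕ := sSup (Set.range (deg G))

/-- `G` and `H` pack: a bijection sends edges of `H` to non-edges of `G`. -/
def Packs {V W : Type} (G : SimpleGraph V) (H : SimpleGraph W) : Prop :=
  ∃ f : W ≃ V, ∀ x y : W, H.Adj x y → ¬ G.Adj (f x) (f y)

/-- `G` contains a copy of `H` as a subgraph. -/
def ContainsCopy {V W : Type} (G : SimpleGraph V) (H : SimpleGraph W) : Prop :=
  ∃ f : W ↪ V, ∀ x y : W, H.Adj x y → G.Adj (f x) (f y)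

/-- `G` realizes the degree sequence `π`. -/
def IsRealization {n : ℕ} (G : SimpleGraph (Fin n)) (π : Fin n → ℕ) : Prop :=
  ∀ i, deg G i = π i

/-- `π` is a graphic sequence. -/
def Graphic {n : ℕ} (π : Fin n → ℕ) : Prop :=
  ∃ G : SimpleGraph (Fin n), IsRealization G π

/-- `π` is potentially `H`-graphic. -/
def PotentiallyGraphic {n : ℕ} {W : Type} (π : Fin n → ℕ) (H : SimpleGraph W) : Prop :=
  ∃ G : SimpleGraph (Fin n), IsRealization G π ∧ ContainsCopy G H

/-- The complementary sequence `π̄ = (n-1-d_n, …, n-1-d_1)`. -/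
def compSeq {n : ℕ} (π : Fin n → ℕ) : Fin n → ℕ := fun i => n - 1 - π i.rev

/-- The potential-Ramsey number. -/
noncomputable def rpot {W₁ W₂ : Type} (H₁ : SimpleGraph W₁) (H₂ : SimpleGraph W₂) : ℕ :=
  sInf {N : ℕ | ∀ π : Fin N → ℕ, Antitone π → Graphic π →
    PotentiallyGraphic π H₁ ∨ PotentiallyGraphic (compSeq π) H₂}

/-- The star `K_{1,t-1}` on `t` vertices, centered at vertex `0`. -/
def starGraph (t : ℕ) : SimpleGraph (Fin t) := SimpleGraph.fromRel (fun i _ => (i : ℕ) = 0)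

/-!
Embed `T` vertex by vertex in breadth-first order from a root, so that each new vertex `x` has at
most one already embedded neighbour `p` (in a tree, the neighbours of `x` no farther from the root
than `x` all equal its parent). If some free vertex of `G` is not adjacent to `f p`, `x` is sent
there. Otherwise all `|V| - |S|` free vertices are neighbours of `f p`, and counting with `Δ(G)` and
`∑_{b ∈ B} (deg_T b - 2) ≤ ℓ(T) - 2` yields an embedded vertex `w` that can be moved to a free
vertex `a₀`, after which `x` takes the old place of `w`.
-/

open Finset

section Degrees

variable {V : Type} [Fintype V]

lemma deg_eq_degree (G : SimpleGraph V) (v : V) : deg G v = G.degree v := by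
  rw [deg, Nat.card_eq_fintype_card, degree, neighborFinset, Set.toFinset_card]

lemma degree_le_maxDeg (G : SimpleGraph V) (v : V) : G.degree v ≤ maxDeg G :=
  deg_eq_degree G v ▸ le_csSup (Set.finite_range _).bddAbove (Set.mem_range_self v)

lemma card_le_maxDeg_of_subset_neighborFinset {G : SimpleGraph V} {s : Finset V} {v : V}
    (hs : s ⊆ G.neighborFinset v) : #s ≤ maxDeg G :=
  (card_le_card hs).trans (G.card_neighborFinset_eq_degree v ▸ degree_le_maxDeg G v)

lemma numLeaves_eq_card_filter (G : SimpleGraph V) :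
    numLeaves G = #{v | G.degree v = 1} := by
  simp [numLeaves, Nat.card_eq_fintype_card, Fintype.card_subtype, deg_eq_degree]

/-- Since every vertex of a nontrivial tree has degree at least one, `deg v - 2 + [v is a leaf]`
is nonnegative; summed over all vertices it equals `ℓ(T) - 2` by the handshake lemma. -/
lemma SimpleGraph.IsTree.sum_degree_le [Nontrivial V] {T : SimpleGraph V} (hT : T.IsTree)
    (B : Finset V) :
    ∑ b ∈ B, (T.degree b : ℤ) ≤ 2 * #B + numLeaves T - 2 := by
  set excess : V → ℤ := fun v => T.degree v - 2 + if T.degree v = 1 then 1 else 0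
  have excess_nonneg : ∀ v, 0 ≤ excess v := fun v => by
    have := hT.connected.preconnected.degree_pos_of_nontrivial v
    by_cases h : T.degree v = 1 <;> simp only [excess, h, if_true, if_false] <;> omega
  have sum_degree : ∑ v, (T.degree v : ℤ) = 2 * Fintype.card V - 2 := by
    rw [← hT.card_edgeFinset, ← Nat.cast_sum, T.sum_degrees_eq_twice_card_edges]
    push_cast
    ring
  have sum_excess : ∑ v, excess v = numLeaves T - 2 := by
    simp only [excess, sum_add_distrib, sum_sub_distrib, sum_degree, numLeaves_eq_card_filter,
      card_filter, sum_const, card_univ, nsmul_eq_mul, Nat.cast_sum, Nat.cast_ite]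
    push_cast
    ring
  calc ∑ b ∈ B, (T.degree b : ℤ)
      ≤ ∑ b ∈ B, (excess b + 2) := sum_le_sum fun v _ => by
        simp only [excess]; split_ifs <;> omega
    _ = ∑ b ∈ B, excess b + 2 * #B := by rw [sum_add_distrib, sum_const, nsmul_eq_mul, mul_comm]
    _ ≤ ∑ v, excess v + 2 * #B :=
        add_le_add_left (sum_le_sum_of_subset_of_nonneg (subset_univ B) fun v _ _ =>
          excess_nonneg v) _
    _ = 2 * #B + numLeaves T - 2 := by rw [sum_excess]; ring

end Degrees

/-- Both `u₁` and `u₂` are the penultimate vertex of the shortest path from `r` to `x`, since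
adjacent vertices of a tree are never at the same distance from `r`. -/
lemma SimpleGraph.IsTree.eq_of_adj_of_dist_le {W : Type} {T : SimpleGraph W} (hT : T.IsTree)
    {r x u₁ u₂ : W}
    (h₁ : T.Adj u₁ x) (h₂ : T.Adj u₂ x) (d₁ : T.dist r u₁ ≤ T.dist r x)
    (d₂ : T.dist r u₂ ≤ T.dist r x) : u₁ = u₂ := by
  obtain ⟨Q, hQ, hQlen⟩ := hT.connected.exists_path_of_dist r x
  have eq_penultimate : ∀ u, T.Adj u x → T.dist r u ≤ T.dist r x → u = Q.penultimate := by
    intro u hux hd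
    have hlt : T.dist r u < T.dist r x := by
      have := hT.dist_eq_dist_add_one_of_adj r hux
      have := hT.dist_ne_of_adj r hux
      omega
    obtain ⟨P, hP, hPlen⟩ := hT.connected.exists_path_of_dist r u
    have hxP : x ∉ P.support := fun hx => by
      have := congrArg Walk.length (hT.isAcyclic.path_concat hQ hP hux.symm hx)
      rw [Walk.length_concat] at this
      omega
    exact hT.isAcyclic.eq_penultimate_of_adj_end hQ hux.symm
      (hT.isAcyclic.mem_support_of_ne_mem_support_of_adj_of_isPath hQ hP hux.symm hxP)
  rw [eq_penultimate u₁ h₁ d₁, eq_penultimate u₂ h₂ d₂]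

def IsPartialPacking {V W : Type} (G : SimpleGraph V) (T : SimpleGraph W) (S : Finset W)
    (f : W → V) : Prop :=
  Set.InjOn f S ∧ ∀ ⦃u⦄, u ∈ S → ∀ ⦃v⦄, v ∈ S → T.Adj u v → ¬ G.Adj (f u) (f v)

namespace IsPartialPacking

variable {V W : Type} {G : SimpleGraph V} {T : SimpleGraph W} {S : Finset W} {f : W → V}

lemma mono {S' : Finset W} (hf : IsPartialPacking G T S f) (h : S' ⊆ S) :
    IsPartialPacking G T S' f :=
  ⟨hf.1.mono (coe_subset.mpr h), fun _ hu _ hv => hf.2 (h hu) (h hv)⟩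

lemma insert_update [DecidableEq W] {x : W} {a : V} (hf : IsPartialPacking G T S f) (hx : x ∉ S)
    (ha : a ∉ S.image f) (hxa : ∀ u ∈ S, T.Adj u x → ¬ G.Adj (f u) a) :
    IsPartialPacking G T (insert x S) (Function.update f x a) := by
  have eqOn : Set.EqOn (Function.update f x a) f S := fun u hu =>
    Function.update_of_ne (ne_of_mem_of_not_mem hu hx) _ _
  have hfa : ∀ u ∈ S, f u ≠ a := fun u hu h => ha (mem_image.mpr ⟨u, hu, h⟩)
  refine ⟨?_, ?_⟩
  · rw [coe_insert, Set.injOn_insert (mod_cast hx), Function.update_self, eqOn.image_eq]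
    exact ⟨hf.1.congr eqOn.symm, fun ⟨u, hu, h⟩ => hfa u hu h⟩
  · intro u hu v hv huv
    rcases mem_insert.mp hu with rfl | huS <;> rcases mem_insert.mp hv with rfl | hvS
    · exact absurd huv (T.loopless.irrefl _)
    · rw [Function.update_self, eqOn hvS]
      exact fun h => hxa v hvS huv.symm h.symm
    · rw [Function.update_self, eqOn huS]
      exact hxa u huS huv
    · rw [eqOn huS, eqOn hvS]
      exact hf.2 huS hvS huv

variable [Fintype V] [Fintype W]

/-- If every free vertex of `G` is adjacent to `f p`, then `f p` has at most `Δ - (|V| - |S|)`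
neighbours in `f(S)`, while the neighbours in `T` of the at most `Δ` vertices `b ∈ S` with
`f b ~ a₀` number at most `2Δ + ℓ - 2`, one of them being `x ∉ S`; together they are too few to
cover `S \ {p}`. -/
lemma exists_swap_candidate (hT : T.IsTree)
    (hcount : 3 * maxDeg G + numLeaves T ≤ Fintype.card V + 1) (hinj : Set.InjOn f S)
    {p x : W} {a₀ : V} (hp : p ∈ S) (hx : x ∉ S) (hpx : T.Adj p x) (ha₀ : a₀ ∉ S.image f)
    (hfull : ∀ a ∉ S.image f, G.Adj (f p) a) :
    ∃ w ∈ S, w ≠ p ∧ ¬ G.Adj (f p) (f w) ∧ ∀ b ∈ S, T.Adj w b → ¬ G.Adj a₀ (f b) := by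
  have : Nontrivial W := nontrivial_of_ne p x hpx.ne
  set nbrP := {w ∈ S | G.Adj (f p) (f w)}
  set nbrA := {b ∈ S | G.Adj a₀ (f b)}
  set blocked := nbrA.biUnion fun b => T.neighborFinset b
  have card_image : ∀ s ⊆ S, #(s.image f) = #s := fun s hs =>
    card_image_of_injOn (hinj.mono (coe_subset.mpr hs))
  have card_free : #(univ \ S.image f) = Fintype.card V - #S := by
    rw [card_sdiff_of_subset (subset_univ _), card_univ, card_image S le_rfl]
  have card_S : #S ≤ Fintype.card V := card_image S le_rfl ▸ card_le_univ _
  have card_nbrP : #nbrP + #(univ \ S.image f) ≤ maxDeg G := by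
    rw [← card_image nbrP (filter_subset _ _), ← card_union_of_disjoint]
    · refine card_le_maxDeg_of_subset_neighborFinset (union_subset ?_ ?_) (v := f p)
      · intro a ha
        obtain ⟨w, hw, rfl⟩ := mem_image.mp ha
        exact (mem_neighborFinset _ _ _).mpr (mem_filter.mp hw).2
      · simpa [subset_iff] using hfull
    · exact disjoint_left.mpr fun a ha ha' => (mem_sdiff.mp ha').2
        (image_subset_image (filter_subset _ _) ha)
  have card_nbrA : #nbrA ≤ maxDeg G := by
    rw [← card_image nbrA (filter_subset _ _)]
    refine card_le_maxDeg_of_subset_neighborFinset (v := a₀) fun a ha => ?_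
    obtain ⟨b, hb, rfl⟩ := mem_image.mp ha
    exact (mem_neighborFinset _ _ _).mpr (mem_filter.mp hb).2
  have card_blocked : (#blocked : ℤ) ≤ 2 * maxDeg G + numLeaves T - 2 := by
    have sum_le := hT.sum_degree_le nbrA
    have card_le : (#blocked : ℤ) ≤ ∑ b ∈ nbrA, (T.degree b : ℤ) := by
      exact_mod_cast card_biUnion_le.trans_eq
        (sum_congr rfl fun b _ => T.card_neighborFinset_eq_degree b)
    have : (#nbrA : ℤ) ≤ maxDeg G := by exact_mod_cast card_nbrA
    linarith
  have x_blocked : x ∈ blocked :=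
    mem_biUnion.mpr ⟨p, mem_filter.mpr ⟨hp, (hfull a₀ ha₀).symm⟩,
      (mem_neighborFinset _ _ _).mpr hpx⟩
  by_contra! hnone
  have cover : S ⊆ insert p (nbrP ∪ blocked.erase x) := fun w hw => by
    by_cases hwp : w = p
    · exact mem_insert.mpr (Or.inl hwp)
    by_cases hpw : G.Adj (f p) (f w)
    · exact mem_insert_of_mem (mem_union_left _ (mem_filter.mpr ⟨hw, hpw⟩))
    obtain ⟨b, hb, hwb, hb₀⟩ := hnone w hw hwp hpw
    refine mem_insert_of_mem (mem_union_right _ (mem_erase.mpr ⟨ne_of_mem_of_not_mem hw hx, ?_⟩))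
    exact mem_biUnion.mpr ⟨b, mem_filter.mpr ⟨hb, hb₀⟩, (mem_neighborFinset _ _ _).mpr hwb.symm⟩
  have := (card_le_card cover).trans ((card_insert_le _ _).trans
    (Nat.add_le_add_right (card_union_le _ _) 1))
  rw [card_erase_of_mem x_blocked] at this
  have := card_pos.mpr ⟨x, x_blocked⟩
  omega

lemma exists_insert [DecidableEq W] (hT : T.IsTree)
    (hcount : 3 * maxDeg G + numLeaves T ≤ Fintype.card V + 1) (hf : IsPartialPacking G T S f)
    {x : W} (hx : x ∉ S) (hS : #S < Fintype.card V)
    (hnbr : ∀ u₁ ∈ S, ∀ u₂ ∈ S, T.Adj u₁ x → T.Adj u₂ x → u₁ = u₂) :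
    ∃ g, IsPartialPacking G T (insert x S) g := by
  have : #(S.image f) < #(univ : Finset V) := card_image_le.trans_lt (by rwa [card_univ])
  obtain ⟨a₀, -, ha₀⟩ := exists_mem_notMem_of_card_lt_card this
  by_cases hleaf : ∃ p ∈ S, T.Adj p x
  swap
  · exact ⟨_, hf.insert_update hx ha₀ fun u hu hux => absurd ⟨u, hu, hux⟩ hleaf⟩
  obtain ⟨p, hp, hpx⟩ := hleaf
  have parent : ∀ u ∈ S, T.Adj u x → u = p := fun u hu hux => hnbr u hu p hp hux hpx
  by_cases hfree : ∃ a ∉ S.image f, ¬ G.Adj (f p) a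
  · obtain ⟨a, ha, hpa⟩ := hfree
    exact ⟨_, hf.insert_update hx ha fun u hu hux => parent u hu hux ▸ hpa⟩
  push Not at hfree
  obtain ⟨w, hw, hwp, hpw, hwa₀⟩ := exists_swap_candidate hT hcount hf.1 hp hx hpx ha₀ hfree
  -- move `w` to the free vertex `a₀`; then `x` can take the place `f w` that `w` vacated
  have hg : IsPartialPacking G T S (Function.update f w a₀) := by
    have := (hf.mono (erase_subset w S)).insert_update (notMem_erase w S)
      (fun h => ha₀ (image_subset_image (erase_subset w S) h))
      fun u hu huw h => hwa₀ u (mem_of_mem_erase hu) huw.symm h.symm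
    rwa [insert_erase hw] at this
  refine ⟨_, hg.insert_update hx (a := f w) ?_ fun u hu hux => ?_⟩
  · simp only [mem_image, not_exists, not_and]
    intro u hu hwu
    by_cases huw : u = w
    · subst huw
      exact ha₀ (mem_image.mpr ⟨u, hu, by simpa using hwu.symm⟩)
    · rw [Function.update_of_ne huw] at hwu
      exact huw (hf.1 hu hw hwu)
  · rw [parent u hu hux, Function.update_of_ne hwp.symm]
    exact hpw

end IsPartialPacking

lemma exists_isPartialPacking_univ {V W : Type} [Fintype V] [Fintype W] {G : SimpleGraph V}
    {T : SimpleGraph W} (hT : T.IsTree)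
    (hcount : 3 * maxDeg G + numLeaves T ≤ Fintype.card V + 1)
    (hcard : Fintype.card W ≤ Fintype.card V) : ∃ f, IsPartialPacking G T univ f := by
  obtain ⟨r⟩ := hT.connected.nonempty
  obtain ⟨v₀⟩ := Fintype.card_pos_iff.mp ((Fintype.card_pos_iff.mpr ⟨r⟩).trans_le hcard)
  suffices ∀ k ≤ Fintype.card W, ∃ S : Finset W, #S = k ∧
      (∀ u ∈ S, ∀ v ∉ S, T.dist r u ≤ T.dist r v) ∧ ∃ f, IsPartialPacking G T S f by
    obtain ⟨S, hS, -, f, hf⟩ := this _ le_rfl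
    exact ⟨f, eq_univ_of_card S hS ▸ hf⟩
  intro k hk
  induction k with
  | zero => exact ⟨∅, rfl, by simp, fun _ => v₀, by simp [IsPartialPacking]⟩
  | succ k ih =>
    obtain ⟨S, hS, hdown, f, hf⟩ := ih (by omega)
    have : Sᶜ.Nonempty := by
      rw [← card_pos, card_compl]
      omega
    obtain ⟨x, hx, hxmin⟩ := exists_min_image Sᶜ (T.dist r) this
    rw [mem_compl] at hx
    obtain ⟨g, hg⟩ := hf.exists_insert hT hcount hx (by omega) fun u₁ h₁ u₂ h₂ a₁ a₂ =>
      hT.eq_of_adj_of_dist_le a₁ a₂ (hdown _ h₁ _ hx) (hdown _ h₂ _ hx)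
    refine ⟨insert x S, by rw [card_insert_of_notMem hx, hS], fun u hu v hv => ?_, g, hg⟩
    have hvS : v ∉ S := fun h => hv (mem_insert_of_mem h)
    rcases mem_insert.mp hu with rfl | hu
    · exact hxmin v (mem_compl.mpr hvS)
    · exact hdown u hu v hvS

/-- If T is a tree and G a graph on n vertices with 3Δ(G) + ℓ(T) - 2 < n,
then G and T pack. -/
theorem tree_packing {V : Type} [Fintype V] {n : ℕ} (hV : Fintype.card V = n)
    (G T : SimpleGraph V) (hT : T.IsTree)
    (h : 3 * (maxDeg G : ℤ) + numLeaves T - 2 < n) :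
    Packs G T := by
  have hcount : 3 * maxDeg G + numLeaves T ≤ Fintype.card V + 1 := by omega
  obtain ⟨f, hinj, hf⟩ := exists_isPartialPacking_univ hT hcount le_rfl
  have hbij : Function.Bijective f := Finite.injective_iff_bijective.mp (by simpa using hinj)
  exact ⟨Equiv.ofBijective f hbij, fun x y hxy => hf (mem_univ x) (mem_univ y) hxy⟩
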